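/- arXiv:2103.10904 — 2 statements merged into one kernel-verified Lean document; each statement's English description precedes it below -/
import Mathlib

section
/- For all m ≥ 1, the Frobenius number G_o(m) of the set {o_m, o_{m+1}, o_{m+2}, …} of odious numbers ≥ o_m satisfies 4m ≤ G_o(m) ≤ 6m − 1. -/
/-- The Thue–Morse sequence: parity of the binary digit sum of `n`. -/
def tm (n : ℕ) : ℕ := (Nat.digits 2 n).sum % 2

/-- The `n`-th odious number. -/
def odiousSeq (n : ℕ) : ℕ := 2 * n + 1 - tm n

/-!
The generators `o_j` with `j ≥ m` are exactly the odious numbers `≥ 2m`. The evil number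
`4m + t(m)` is not a sum of them: one summand would be odious, three already exceed it, and two
summands must be `2m + 2m` or `2m + (2m + 1)`, each containing an evil term.

Every odious `k ≥ 6m` is a generator, and every evil `k ≥ 6m` is a sum of two odious numbers
`≥ 2⌊k/6⌋`. For odd `k = 2s + 1` this asks for `s = a + b` with `t(a) ≠ t(b)` and `a, b ≥ ⌊s/3⌋`.
Such balanced splits with `t(a) + t(b) ≡ t(s)` exist for every `s`: from a split of `s` one gets a
split of `2s + 1` by putting the extra `1` on the smaller part, and an even `s` is split directly
by pairing the window `{4q + 1, 4q + 2}`, on which `t` is constant, against an aligned pair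
`{2p, 2p + 1}`, on which `t` takes both values. Large even `k` are split by the same pairing with
`t(q) = 0`, and the finitely many small `k` are checked by evaluation.
-/

lemma tm_le_one (n : ℕ) : tm n ≤ 1 :=
  Nat.le_of_lt_succ (Nat.mod_lt _ two_pos)

lemma tm_zero : tm 0 = 0 := rfl

lemma tm_two_mul (n : ℕ) : tm (2 * n) = tm n := by
  rcases Nat.eq_zero_or_pos n with rfl | hn
  · rfl
  · rw [tm, ← zero_add (2 * n), Nat.digits_add 2 one_lt_two 0 n two_pos (Or.inr hn.ne'),
      List.sum_cons, zero_add, tm]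

lemma tm_two_mul_add_one (n : ℕ) : tm (2 * n + 1) = 1 - tm n := by
  rw [tm, add_comm, Nat.digits_add 2 one_lt_two 1 n one_lt_two (Or.inl one_ne_zero),
    List.sum_cons]
  have := tm_le_one n
  unfold tm at *
  omega

lemma tm_two_mul_add_tm_two_mul_add_one (n : ℕ) : tm (2 * n) + tm (2 * n + 1) = 1 := by
  have := tm_le_one n
  rw [tm_two_mul, tm_two_mul_add_one]
  omega

lemma exists_add_eq_window (q p e : ℕ) (he : e ≤ 1) :
    ∃ a b, a + b = 4 * q + 2 * p + 2 ∧ 4 * q + 1 ≤ a ∧ a ≤ 4 * q + 2 ∧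
      tm a = 1 - tm q ∧ tm b = e := by
  have h1 : tm (4 * q + 1) = 1 - tm q := by
    rw [show 4 * q + 1 = 2 * (2 * q) + 1 by ring, tm_two_mul_add_one, tm_two_mul]
  have h2 : tm (4 * q + 2) = 1 - tm q := by
    rw [show 4 * q + 2 = 2 * (2 * q + 1) by ring, tm_two_mul, tm_two_mul_add_one]
  have hp := tm_two_mul_add_tm_two_mul_add_one p
  by_cases hpe : tm (2 * p) = e
  · exact ⟨4 * q + 2, 2 * p, by ring, by omega, le_rfl, h2, hpe⟩
  · exact ⟨4 * q + 1, 2 * p + 1, by ring, le_rfl, by omega, h1, by omega⟩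

/-- The parity condition says that the binary addition `a + b` has an even number of carries. -/
def IsBalancedSplit (s a b : ℕ) : Prop :=
  a + b = s ∧ (tm a + tm b) % 2 = tm s ∧ s ≤ 3 * a + 2 ∧ s ≤ 3 * b + 2

namespace IsBalancedSplit

variable {s a b : ℕ}

lemma symm (h : IsBalancedSplit s a b) : IsBalancedSplit s b a := by
  obtain ⟨hs, ht, ha, hb⟩ := h
  exact ⟨by omega, by omega, hb, ha⟩

lemma two_mul_add_one (h : IsBalancedSplit s a b) (hab : a ≤ b) :
    IsBalancedSplit (2 * s + 1) (2 * a + 1) (2 * b) := by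
  obtain ⟨hs, ht, ha, hb⟩ := h
  refine ⟨by omega, ?_, by omega, by omega⟩
  rw [tm_two_mul_add_one, tm_two_mul, tm_two_mul_add_one]
  have := tm_le_one a
  have := tm_le_one b
  have := tm_le_one s
  omega

end IsBalancedSplit

lemma exists_isBalancedSplit_two_mul (r : ℕ) : ∃ a b, IsBalancedSplit (2 * r) a b := by
  have htr := tm_le_one r
  by_cases hr : tm r = 0
  · exact ⟨r, r, by omega, by rw [tm_two_mul]; omega, by omega, by omega⟩
  have hr0 : r ≠ 0 := by rintro rfl; exact hr tm_zero
  have hr3 : r ≠ 3 := by rintro rfl; exact hr (by decide)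
  -- With `q ≈ r/6` the window `{4q + 1, 4q + 2}` lies between `(2r - 2)/3` and `(4r + 2)/3`;
  -- this fails only for `r ∈ {0, 3}`.
  set q := (2 * r + 6) / 12
  have htq := tm_le_one q
  obtain ⟨a, b, hab, hqa, haq, hta, htb⟩ :=
    exists_add_eq_window q (r - 2 * q - 1) ((tm r + tm q + 1) % 2) (by omega)
  refine ⟨a, b, by omega, ?_, by omega, by omega⟩
  rw [tm_two_mul, hta, htb]
  omega

theorem exists_isBalancedSplit (s : ℕ) : ∃ a b, IsBalancedSplit s a b := by
  induction s using Nat.strong_induction_on with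
  | _ s ih =>
    obtain ⟨r, rfl | rfl⟩ := Nat.even_or_odd' s
    · exact exists_isBalancedSplit_two_mul r
    · obtain ⟨a, b, h⟩ := ih r (by omega)
      rcases le_total a b with hab | hba
      · exact ⟨_, _, h.two_mul_add_one hab⟩
      · exact ⟨_, _, h.symm.two_mul_add_one hba⟩

lemma exists_odious_add_eq_of_odd (s : ℕ) (hs : tm (2 * s + 1) = 0) :
    ∃ x y, x + y = 2 * s + 1 ∧ tm x = 1 ∧ tm y = 1 ∧
      2 * ((2 * s + 1) / 6) ≤ x ∧ 2 * ((2 * s + 1) / 6) ≤ y := by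
  rw [tm_two_mul_add_one] at hs
  have hts : tm s = 1 := by have := tm_le_one s; omega
  obtain ⟨a, b, hab, ht, ha, hb⟩ := exists_isBalancedSplit s
  have := tm_le_one b
  rcases Nat.le_one_iff_eq_zero_or_eq_one.mp (tm_le_one a) with hta | hta
  · refine ⟨2 * b, 2 * a + 1, by omega, ?_, ?_, by omega, by omega⟩
    · rw [tm_two_mul]; omega
    · rw [tm_two_mul_add_one]; omega
  · refine ⟨2 * a, 2 * b + 1, by omega, ?_, ?_, by omega, by omega⟩
    · rwa [tm_two_mul]
    · rw [tm_two_mul_add_one]; omega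

lemma exists_odious_add_eq_of_even (k : ℕ) (hk : 36 ≤ k) (heven : Even k) :
    ∃ x y, x + y = k ∧ tm x = 1 ∧ tm y = 1 ∧ 2 * (k / 6) ≤ x ∧ 2 * (k / 6) ≤ y := by
  obtain ⟨s, rfl⟩ := heven
  -- One of `2n, 2n + 1` is evil, and `n ≈ k/24` keeps `4q + 1, 4q + 2` in `[2⌊k/6⌋, k - 2⌊k/6⌋]`.
  set n := (2 * s / 6 + 3) / 4
  have hn := tm_two_mul_add_tm_two_mul_add_one n
  obtain ⟨q, hqn, hq⟩ : ∃ q, (q = 2 * n ∨ q = 2 * n + 1) ∧ tm q = 0 := by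
    by_cases h : tm (2 * n) = 0
    · exact ⟨_, Or.inl rfl, h⟩
    · exact ⟨_, Or.inr rfl, by omega⟩
  obtain ⟨a, b, hab, hqa, haq, hta, htb⟩ := exists_add_eq_window q (s - 2 * q - 1) 1 le_rfl
  exact ⟨a, b, by omega, by rw [hta, hq], htb, by omega, by omega⟩

lemma exists_odious_add_eq_of_lt (k : ℕ) (hk : 6 ≤ k) (hk' : k < 36) (hev : tm k = 0) :
    ∃ x y, x + y = k ∧ tm x = 1 ∧ tm y = 1 ∧ 2 * (k / 6) ≤ x ∧ 2 * (k / 6) ≤ y := by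
  have : ∀ k < 36, 6 ≤ k → tm k = 0 → ∃ x < k + 1, tm x = 1 ∧ tm (k - x) = 1 ∧
      2 * (k / 6) ≤ x ∧ 2 * (k / 6) ≤ k - x := by decide
  obtain ⟨x, hxk, hx, hy, hxl, hyl⟩ := this k hk' hk hev
  exact ⟨x, k - x, by omega, hx, hy, hxl, hyl⟩

theorem exists_odious_add_eq_of_evil (k : ℕ) (hk : 6 ≤ k) (hev : tm k = 0) :
    ∃ x y, x + y = k ∧ tm x = 1 ∧ tm y = 1 ∧ 2 * (k / 6) ≤ x ∧ 2 * (k / 6) ≤ y := by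
  rcases lt_or_ge k 36 with hk' | hk'
  · exact exists_odious_add_eq_of_lt k hk hk' hev
  obtain ⟨s, rfl | rfl⟩ := Nat.even_or_odd' k
  · exact exists_odious_add_eq_of_even _ hk' (even_two_mul s)
  · exact exists_odious_add_eq_of_odd s hev

lemma odiousSeq_ge (j : ℕ) : 2 * j ≤ odiousSeq j := by
  have := tm_le_one j
  unfold odiousSeq
  omega

lemma tm_odiousSeq (j : ℕ) : tm (odiousSeq j) = 1 := by
  rcases Nat.le_one_iff_eq_zero_or_eq_one.mp (tm_le_one j) with h | h
  · rw [odiousSeq, h, Nat.sub_zero, tm_two_mul_add_one, h]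
  · rw [odiousSeq, h, Nat.add_sub_cancel, tm_two_mul, h]

lemma odiousSeq_div_two {x : ℕ} (hx : tm x = 1) : odiousSeq (x / 2) = x := by
  obtain ⟨n, rfl | rfl⟩ := Nat.even_or_odd' x
  · rw [tm_two_mul] at hx
    rw [odiousSeq, Nat.mul_div_cancel_left n two_pos, hx]
    omega
  · have h := tm_le_one n
    rw [tm_two_mul_add_one] at hx
    rw [odiousSeq, show (2 * n + 1) / 2 = n by omega]
    omega

lemma setOf_odiousSeq_ge (m : ℕ) :
    {x : ℕ | ∃ j, m ≤ j ∧ x = odiousSeq j} = {x | tm x = 1 ∧ 2 * m ≤ x} := by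
  ext x
  constructor
  · rintro ⟨j, hj, rfl⟩
    exact ⟨tm_odiousSeq j, le_trans (by omega) (odiousSeq_ge j)⟩
  · rintro ⟨hx, hmx⟩
    exact ⟨x / 2, by omega, (odiousSeq_div_two hx).symm⟩

lemma add_ne_four_mul_add_tm {m x y : ℕ} (hx : tm x = 1) (hy : tm y = 1) (hmx : 2 * m ≤ x)
    (hmy : 2 * m ≤ y) : x + y ≠ 4 * m + tm m := by
  intro h
  have h2m := tm_two_mul m
  have h2m1 := tm_two_mul_add_one m
  have := tm_le_one m
  rcases Nat.le_one_iff_eq_zero_or_eq_one.mp this with h0 | h1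
  · obtain rfl : x = 2 * m := by omega
    omega
  · rcases (by omega : x = 2 * m + 1 ∨ y = 2 * m + 1) with rfl | rfl <;> omega

lemma four_mul_add_tm_notMem_closure {m : ℕ} (hm : 1 ≤ m) :
    4 * m + tm m ∉ AddSubmonoid.closure {x : ℕ | tm x = 1 ∧ 2 * m ≤ x} := by
  have htm : tm (4 * m + tm m) = 0 := by
    have := tm_le_one m
    rcases Nat.le_one_iff_eq_zero_or_eq_one.mp this with h | h
    · rw [h, add_zero, show 4 * m = 2 * (2 * m) by ring, tm_two_mul, tm_two_mul, h]
    · rw [h, show 4 * m + 1 = 2 * (2 * m) + 1 by ring, tm_two_mul_add_one, tm_two_mul, h]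
  suffices key : ∀ n ∈ AddSubmonoid.closure {x : ℕ | tm x = 1 ∧ 2 * m ≤ x},
      n = 0 ∨ (2 * m ≤ n ∧ n ≠ 4 * m + tm m ∧ (n < 4 * m → tm n = 1)) by
    intro hmem
    rcases key _ hmem with h | ⟨-, h, -⟩ <;> omega
  intro n hn
  induction hn using AddSubmonoid.closure_induction with
  | mem x hx => exact Or.inr ⟨hx.2, fun h => by subst h; have := hx.1; omega, fun _ => hx.1⟩
  | zero => exact Or.inl rfl
  | add x y _ _ hx hy =>
    have := tm_le_one m
    rcases hx with rfl | ⟨hmx, hxN, hx⟩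
    · rwa [zero_add]
    rcases hy with rfl | ⟨hmy, -, hy⟩
    · rw [add_zero]
      exact Or.inr ⟨hmx, hxN, hx⟩
    refine Or.inr ⟨by omega, fun h => ?_, fun h => by omega⟩
    exact add_ne_four_mul_add_tm (hx (by omega)) (hy (by omega)) hmx hmy h

lemma mem_closure_of_six_mul_le {m k : ℕ} (hm : 1 ≤ m) (hk : 6 * m ≤ k) :
    k ∈ AddSubmonoid.closure {x : ℕ | tm x = 1 ∧ 2 * m ≤ x} := by
  rcases Nat.le_one_iff_eq_zero_or_eq_one.mp (tm_le_one k) with hev | hod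
  · obtain ⟨x, y, rfl, hx, hy, hmx, hmy⟩ := exists_odious_add_eq_of_evil k (by omega) hev
    exact AddSubmonoid.add_mem _ (AddSubmonoid.subset_closure ⟨hx, by omega⟩)
      (AddSubmonoid.subset_closure ⟨hy, by omega⟩)
  · exact AddSubmonoid.subset_closure ⟨hod, by omega⟩

theorem frobenius_odious_bounds (m F : ℕ) (hm : 1 ≤ m)
    (hF : FrobeniusNumber F {x : ℕ | ∃ j, m ≤ j ∧ x = odiousSeq j}) :
    4 * m ≤ F ∧ F ≤ 6 * m - 1 := by
  rw [FrobeniusNumber, setOf_odiousSeq_ge] at hF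
  obtain ⟨hFnot, hFmax⟩ := hF
  constructor
  · exact le_trans (Nat.le_add_right _ _) (hFmax (four_mul_add_tm_notMem_closure hm))
  · by_contra h
    exact hFnot (mem_closure_of_six_mul_le hm (by omega))
end

section
/- The limit of G_U(n)/n as n → ∞ equals (9 + 3√5)/2, where G_U(n) is the Frobenius number of the tail {U_n, U_{n+1}, …} of the upper Wythoff sequence U_n = ⌊nφ²⌋, φ = (1+√5)/2. -/
noncomputable def phi : ℝ := (1 + Real.sqrt 5) / 2

/-- The upper Wythoff sequence. -/
noncomputable def uw (n : ℕ) : ℕ := ⌊(n : ℝ) * phi ^ 2⌋₊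

/-! Write `α = φ² ≈ 2.618`, so that `uw j = j α - {j α}`. For `i + j + l = m` the defect
`uw m - uw i - uw j - uw l = {i α} + {j α} + {l α} - {m α}` is `0`, `1` or `2`. Since `5 α` is
within `0.09` of an integer, the parts `{i α}` with `n ≤ i ≤ n + 60` meet every window of length
`0.09`; choosing `i`, `j` this way realises any defect, so every `k > uw (3 n + 120)` is a sum of
three tail elements. Conversely `uw p + uw q` is `uw (p + q)` or `uw (p + q) - 1`, so the number
`uw c + 1` right after a gap `uw (c + 1) - uw c = 3` with `c ≈ 3 n` is neither one nor a sum of two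
tail elements, and is smaller than any sum of three. Hence `G_U(n) = 3 α n + O(1)`. -/

open Filter Topology

lemma phi_sq : phi ^ 2 = (3 + Real.sqrt 5) / 2 := by
  rw [show phi = Real.goldenRatio from rfl, Real.goldenRatio_sq]
  ring

lemma phi_sq_gt : 157 / 60 < phi ^ 2 := by
  have : (67 / 30 : ℝ) < Real.sqrt 5 := (Real.lt_sqrt (by norm_num)).2 (by norm_num)
  rw [phi_sq]; linarith

lemma phi_sq_lt : phi ^ 2 < 21 / 8 := by
  have : Real.sqrt 5 < 9 / 4 := (Real.sqrt_lt' (by norm_num)).2 (by norm_num)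
  rw [phi_sq]; linarith

lemma exists_fract_add_mul_mem_Ico {θ : ℝ} (hθ : 0 < θ) (x : ℝ) {a : ℝ} (ha : 0 ≤ a)
    (haθ : a + θ ≤ 1) : ∃ s : ℕ, s * θ < 1 + θ ∧ Int.fract (x + s * θ) ∈ Set.Ico a (a + θ) := by
  set d := Int.fract (a - x)
  have hd₀ : 0 ≤ d := Int.fract_nonneg _
  have hd₁ : d < 1 := Int.fract_lt_one _
  obtain ⟨s, hds, hsd⟩ : ∃ s : ℕ, d ≤ s * θ ∧ s * θ < d + θ := by
    refine ⟨⌈d / θ⌉₊, (div_le_iff₀ hθ).1 (Nat.le_ceil _), ?_⟩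
    have := Nat.ceil_lt_add_one (div_nonneg hd₀ hθ.le)
    rwa [← lt_div_iff₀ hθ, add_div, div_self hθ.ne']
  have hx : x + s * θ = a + (s * θ - d) - ⌊a - x⌋ := by
    rw [← Int.self_sub_fract (a - x)]; ring
  refine ⟨s, by linarith, ?_⟩
  rw [hx, Int.fract_sub_intCast, Int.fract_eq_self.2 ⟨by linarith, by linarith⟩]
  constructor <;> linarith

/-- Since `5 φ² = 13 + rot`, moving the index by `5` rotates the fractional part of `j φ²`
by `rot ≈ 0.09`. -/
noncomputable def rot : ℝ := 5 * phi ^ 2 - 13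

lemma exists_fract_mul_phi_sq_mem_Ico (n : ℕ) {a : ℝ} (ha : 0 ≤ a) (harot : a + rot ≤ 1) :
    ∃ i, n ≤ i ∧ i ≤ n + 60 ∧ Int.fract (i * phi ^ 2) ∈ Set.Ico a (a + rot) := by
  have hrot : 1 / 12 < rot := by unfold rot; linarith [phi_sq_gt]
  obtain ⟨s, hs, hmem⟩ :=
    exists_fract_add_mul_mem_Ico (by linarith) ((n : ℝ) * phi ^ 2) ha harot
  have hs12 : s < 13 := by
    have : (s : ℝ) < 13 := by nlinarith
    exact_mod_cast this
  refine ⟨n + 5 * s, by omega, by omega, ?_⟩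
  have : ((n + 5 * s : ℕ) : ℝ) * phi ^ 2 = n * phi ^ 2 + s * rot + ((13 * s : ℕ) : ℝ) := by
    unfold rot; push_cast; ring
  rwa [this, Int.fract_add_natCast]

lemma uw_eq (j : ℕ) : (uw j : ℝ) = j * phi ^ 2 - Int.fract (j * phi ^ 2) := by
  rw [uw, natCast_floor_eq_intCast_floor (by positivity), Int.self_sub_fract]

lemma uw_add_le (p q : ℕ) : uw p + uw q ≤ uw (p + q) := by
  have h : (uw p + uw q : ℝ) < uw (p + q) + 1 := by
    rw [uw_eq, uw_eq, uw_eq]; push_cast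
    linarith [Int.fract_nonneg (p * phi ^ 2), Int.fract_nonneg (q * phi ^ 2),
      Int.fract_lt_one (((p : ℝ) + q) * phi ^ 2), add_mul (p : ℝ) q (phi ^ 2)]
  exact Nat.lt_succ_iff.1 (by exact_mod_cast h)

lemma uw_add_le_add_one (p q : ℕ) : uw (p + q) ≤ uw p + uw q + 1 := by
  have h : (uw (p + q) : ℝ) < uw p + uw q + 2 := by
    rw [uw_eq, uw_eq, uw_eq]; push_cast
    linarith [Int.fract_lt_one (p * phi ^ 2), Int.fract_lt_one (q * phi ^ 2),
      Int.fract_nonneg (((p : ℝ) + q) * phi ^ 2), add_mul (p : ℝ) q (phi ^ 2)]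
  have : uw (p + q) < uw p + uw q + 2 := by exact_mod_cast h
  omega

lemma uw_one : uw 1 = 2 := by
  rw [uw, Nat.floor_eq_iff (by positivity)]
  constructor <;> norm_num <;> linarith [phi_sq_gt, phi_sq_lt]

lemma uw_two : uw 2 = 5 := by
  rw [uw, Nat.floor_eq_iff (by positivity)]
  constructor <;> norm_num <;> linarith [phi_sq_gt, phi_sq_lt]

lemma uw_succ_mem_Icc (c : ℕ) : uw (c + 1) ∈ Set.Icc (uw c + 2) (uw c + 3) := by
  have := uw_add_le c 1
  have := uw_add_le_add_one c 1
  rw [uw_one] at *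
  exact ⟨by omega, by omega⟩

lemma uw_strictMono : StrictMono uw :=
  strictMono_nat_of_lt_succ fun c => by have := (uw_succ_mem_Icc c).1; omega

lemma uw_succ_eq_add_three_or (c : ℕ) :
    uw (c + 1) = uw c + 3 ∨ uw (c + 2) = uw (c + 1) + 3 := by
  have := uw_add_le c 2
  have := uw_succ_mem_Icc c
  have : uw (c + 2) ∈ Set.Icc (uw (c + 1) + 2) (uw (c + 1) + 3) := uw_succ_mem_Icc (c + 1)
  rw [uw_two] at *
  simp only [Set.mem_Icc] at *
  omega

lemma uw_add_add_add_eq {i j l M t : ℕ} (hM : i + j + l = M)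
    (h : |Int.fract (i * phi ^ 2) + Int.fract (j * phi ^ 2) + Int.fract (l * phi ^ 2)
      - Int.fract (M * phi ^ 2) - t| < 1) :
    uw i + uw j + uw l + t = uw M := by
  subst hM
  have hz : (((uw (i + j + l) : ℤ) - uw i - uw j - uw l - t : ℤ) : ℝ)
      = Int.fract (i * phi ^ 2) + Int.fract (j * phi ^ 2) + Int.fract (l * phi ^ 2)
        - Int.fract (((i + j + l : ℕ) : ℝ) * phi ^ 2) - t := by
    push_cast [uw_eq]; ring
  rw [← hz] at h
  have : |(uw (i + j + l) : ℤ) - uw i - uw j - uw l - t| < 1 := by exact_mod_cast h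
  have := Int.abs_lt_one_iff.1 this
  omega

lemma fract_succ_mul_phi_sq_lt {m t : ℕ} (ht : uw m + t < uw (m + 1)) :
    Int.fract (((m + 1 : ℕ) : ℝ) * phi ^ 2) < phi ^ 2 - t := by
  have ht' : (uw m + t + 1 : ℝ) ≤ uw (m + 1) := by exact_mod_cast ht
  rw [uw_eq, uw_eq] at ht'
  push_cast at ht' ⊢
  linarith [Int.fract_lt_one (m * phi ^ 2)]

lemma exists_uw_add_add_add_eq {n M t : ℕ} (hM : 3 * n + 120 ≤ M) (ht : 1 ≤ t)
    (hβ : Int.fract (M * phi ^ 2) < phi ^ 2 - t) :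
    ∃ i j l, n ≤ i ∧ n ≤ j ∧ n ≤ l ∧ uw i + uw j + uw l + t = uw M := by
  have hrot₀ : 0 < rot := by unfold rot; linarith [phi_sq_gt]
  have hrot₁ : phi ^ 2 + 3 * rot < 3 := by unfold rot; linarith [phi_sq_lt]
  have ht' : (1 : ℝ) ≤ t := by exact_mod_cast ht
  set β := Int.fract (M * phi ^ 2)
  have hβ₀ : 0 ≤ β := Int.fract_nonneg _
  -- then `{i φ²} + {j φ²} ∈ [t - 1 + β + rot, t - 1 + β + 3 rot)`, which pins the defect to `t`
  set a := (t - 1 + β + rot) / 2 with ha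
  have ha₀ : 0 ≤ a := by positivity
  have ha₁ : a + rot ≤ 1 := by rw [ha]; linarith
  obtain ⟨i, hni, hi, hfi⟩ := exists_fract_mul_phi_sq_mem_Ico n ha₀ ha₁
  obtain ⟨j, hnj, hj, hfj⟩ := exists_fract_mul_phi_sq_mem_Ico n ha₀ ha₁
  refine ⟨i, j, M - i - j, hni, hnj, by omega,
    uw_add_add_add_eq (by omega) (abs_lt.2 ⟨?_, ?_⟩)⟩ <;>
  linarith [phi_sq_gt, ha, hfi.1, hfi.2, hfj.1, hfj.2,
    Int.fract_nonneg (((M - i - j : ℕ) : ℝ) * phi ^ 2),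
    Int.fract_lt_one (((M - i - j : ℕ) : ℝ) * phi ^ 2)]

def uwTail (n : ℕ) : Set ℕ := {x | ∃ j, n ≤ j ∧ x = uw j}

lemma exists_lt_le_succ_of_strictMono {f : ℕ → ℕ} (hf : StrictMono f) {c k : ℕ} (hk : f c < k) :
    ∃ m, c ≤ m ∧ f m < k ∧ k ≤ f (m + 1) := by
  have hex : ∃ d, k ≤ f (c + d) := ⟨k, (Nat.le_add_left k c).trans (hf.id_le _)⟩
  have hfind : Nat.find hex ≠ 0 := fun h => by
    have := Nat.find_spec hex
    rw [h, add_zero] at this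
    omega
  obtain ⟨d, hd⟩ := Nat.exists_eq_succ_of_ne_zero hfind
  refine ⟨c + d, by omega, not_le.1 (Nat.find_min hex (by omega)), ?_⟩
  simpa [hd, add_assoc] using Nat.find_spec hex

lemma mem_closure_uwTail_of_uw_lt {n k : ℕ} (hk : uw (3 * n + 120) < k) :
    k ∈ AddSubmonoid.closure (uwTail n) := by
  obtain ⟨m, hm, hmk, hkm⟩ := exists_lt_le_succ_of_strictMono uw_strictMono hk
  obtain ⟨t, ht⟩ : ∃ t, k + t = uw (m + 1) := ⟨uw (m + 1) - k, by omega⟩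
  rcases Nat.eq_zero_or_pos t with rfl | htpos
  · exact AddSubmonoid.subset_closure ⟨m + 1, by omega, by omega⟩
  obtain ⟨i, j, l, hi, hj, hl, hsum⟩ := exists_uw_add_add_add_eq (n := n) (M := m + 1)
    (by omega) htpos (fract_succ_mul_phi_sq_lt (t := t) (by omega))
  have hmem (r : ℕ) (hr : n ≤ r) : uw r ∈ AddSubmonoid.closure (uwTail n) :=
    AddSubmonoid.subset_closure ⟨r, hr, rfl⟩
  rw [show k = uw i + uw j + uw l by omega]
  exact add_mem (add_mem (hmem i hi) (hmem j hj)) (hmem l hl)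

lemma eq_zero_or_mem_or_exists_add_of_mem_closure {S : Set ℕ} {b x : ℕ} (hS : ∀ y ∈ S, b ≤ y)
    (hx : x ∈ AddSubmonoid.closure S) (hxb : x < 3 * b) :
    x = 0 ∨ x ∈ S ∨ ∃ y ∈ S, ∃ z ∈ S, x = y + z := by
  obtain ⟨L, hL, rfl⟩ := AddSubmonoid.exists_list_of_mem_closure hx
  match L, hL, hxb with
  | [], _, _ => simp
  | [y], hL, _ => simp [hL y (by simp)]
  | [y, z], hL, _ => exact Or.inr (Or.inr ⟨y, hL y (by simp), z, hL z (by simp), by simp⟩)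
  | y :: z :: w :: L, hL, hxb =>
    have := hS y (hL y (by simp))
    have := hS z (hL z (by simp))
    have := hS w (hL w (by simp))
    simp only [List.sum_cons] at hxb
    omega

lemma uw_add_one_notMem_closure {n c : ℕ} (hgap : uw (c + 1) = uw c + 3)
    (hlt : uw c + 1 < 3 * uw n) : uw c + 1 ∉ AddSubmonoid.closure (uwTail n) := by
  have hS : ∀ y ∈ uwTail n, uw n ≤ y := by
    rintro _ ⟨j, hj, rfl⟩
    exact uw_strictMono.monotone hj
  have hsplit (r : ℕ) : uw r ≤ uw c ∨ uw c + 3 ≤ uw r := by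
    rcases le_or_gt r c with h | h
    · exact Or.inl (uw_strictMono.monotone h)
    · exact Or.inr (hgap ▸ uw_strictMono.monotone h)
  intro hmem
  rcases eq_zero_or_mem_or_exists_add_of_mem_closure hS hmem hlt with
    h | ⟨j, -, hj⟩ | ⟨_, ⟨p, -, rfl⟩, _, ⟨q, -, rfl⟩, hpq⟩
  · omega
  · rcases hsplit j with h | h <;> omega
  · have := uw_add_le p q
    have := uw_add_le_add_one p q
    rcases hsplit (p + q) with h | h <;> omega

lemma exists_notMem_closure_uwTail {n : ℕ} (hn : 2 ≤ n) :
    ∃ c, 3 * n ≤ c + 3 ∧ uw c + 1 ∉ AddSubmonoid.closure (uwTail n) := by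
  have h3n : uw (n + n + n) ≤ 3 * uw n + 2 := by
    have := uw_add_le_add_one (n + n) n
    have := uw_add_le_add_one n n
    omega
  have hlt (c : ℕ) (hc : c + 2 ≤ n + n + n) : uw c + 1 < 3 * uw n := by
    have := uw_add_le c 2
    have := uw_strictMono.monotone hc
    rw [uw_two] at *
    omega
  rcases uw_succ_eq_add_three_or (3 * n - 3) with h | h
  · exact ⟨3 * n - 3, by omega, uw_add_one_notMem_closure h (hlt _ (by omega))⟩
  · exact ⟨3 * n - 3 + 1, by omega, uw_add_one_notMem_closure h (hlt _ (by omega))⟩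

lemma tendsto_div_natCast_of_abs_sub_mul_le {f : ℕ → ℝ} {a C : ℝ}
    (h : ∀ᶠ n in atTop, |f n - a * n| ≤ C) : Tendsto (fun n => f n / n) atTop (𝓝 a) := by
  rw [tendsto_iff_norm_sub_tendsto_zero]
  refine squeeze_zero' (Eventually.of_forall fun _ => norm_nonneg _) ?_
    (tendsto_const_div_atTop_nhds_zero_nat C)
  filter_upwards [h, eventually_gt_atTop 0] with n hn hpos
  have hpos' : (0 : ℝ) < n := by exact_mod_cast hpos
  rw [Real.norm_eq_abs, show f n / n - a = (f n - a * n) / n by field_simp, abs_div,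
    Nat.abs_cast]
  gcongr

theorem frobenius_upper_wythoff_limit (G : ℕ → ℕ)
    (hG : ∀ n, 1 ≤ n → FrobeniusNumber (G n) {x : ℕ | ∃ j, n ≤ j ∧ x = uw j}) :
    Filter.Tendsto (fun n : ℕ => (G n : ℝ) / n) Filter.atTop
      (nhds ((9 + 3 * Real.sqrt 5) / 2)) := by
  rw [show (9 + 3 * Real.sqrt 5) / 2 = 3 * phi ^ 2 by rw [phi_sq]; ring]
  refine tendsto_div_natCast_of_abs_sub_mul_le (C := 120 * phi ^ 2) ?_
  filter_upwards [eventually_ge_atTop 2] with n hn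
  obtain ⟨hGnot, hGall⟩ := frobeniusNumber_iff.1 (hG n (by omega) : FrobeniusNumber _ (uwTail n))
  obtain ⟨c, hc, hcnot⟩ := exists_notMem_closure_uwTail hn
  have hlow : uw c + 1 ≤ G n := not_lt.1 fun h => hcnot (hGall _ h)
  have hup : G n ≤ uw (3 * n + 120) := not_lt.1 fun h => hGnot (mem_closure_uwTail_of_uw_lt h)
  have hlow' : (3 * n - 3 : ℝ) * phi ^ 2 ≤ G n := by
    have hc' : (3 * n : ℝ) ≤ c + 3 := by exact_mod_cast hc
    have : (uw c + 1 : ℝ) ≤ G n := by exact_mod_cast hlow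
    nlinarith [uw_eq c, Int.fract_lt_one (c * phi ^ 2), phi_sq_gt]
  have hup' : (G n : ℝ) ≤ (3 * n + 120) * phi ^ 2 := by
    have : (G n : ℝ) ≤ uw (3 * n + 120) := by exact_mod_cast hup
    push_cast [uw_eq] at this
    linarith [Int.fract_nonneg ((3 * n + 120) * phi ^ 2)]
  rw [abs_le]
  constructor <;> nlinarith [phi_sq_gt]
end
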